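/- Let T : X → X satisfy ‖Tx − Ty‖ ≤ a · ‖x − Tx‖^α · ‖y − Ty‖^(1−α) for all x, y (a ∈ [0,1), α ∈ (0,1)). Then for the Picard iterates x_n = Tⁿ x_0 one has, for all n ≥ 1 and r ≥ 1, ‖x_n − x_{n+r}‖ ≤ (aⁿ/(1−a)) ‖x_0 − x_1‖. -/

import Mathlib

/-!
Write `dₙ = ‖xₙ - xₙ₊₁‖`. Applying the hypothesis to the pair `(xₙ, xₙ₊₁)` gives
`dₙ₊₁ ≤ a dₙ^α dₙ₊₁^(1-α)`, and weighted AM–GM turns this into `dₙ₊₁ ≤ a dₙ`. Hence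
`dₙ ≤ aⁿ d₀`, and the triangle inequality along `xₙ, …, xₙ₊ᵣ` bounds `‖xₙ - xₙ₊ᵣ‖` by a tail of a
geometric series.
-/

open Finset

theorem le_mul_of_le_mul_rpow_mul_rpow {a α s t : ℝ} (ha0 : 0 ≤ a) (ha1 : a < 1)
    (hα0 : 0 ≤ α) (hα1 : α ≤ 1) (hs : 0 ≤ s) (ht : 0 ≤ t)
    (h : t ≤ a * s ^ α * t ^ (1 - α)) : t ≤ a * s := by
  have amgm : s ^ α * t ^ (1 - α) ≤ α * s + (1 - α) * t :=
    Real.geom_mean_le_arith_mean2_weighted hα0 (by linarith) hs ht (by ring)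
  have ht' : t ≤ a * (α * s + (1 - α) * t) := by
    rw [mul_assoc] at h
    exact h.trans (mul_le_mul_of_nonneg_left amgm ha0)
  have hpos : 0 < 1 - a + a * α := by nlinarith [mul_nonneg ha0 hα0]
  -- `ht'` reads `t (1 - a + aα) ≤ aα s`, and `α ≤ 1 - a + aα` because `α ≤ 1`.
  have hscaled : t * (1 - a + a * α) ≤ a * s * (1 - a + a * α) := by
    nlinarith [mul_nonneg (mul_nonneg (mul_nonneg ha0 hs) (sub_nonneg.2 ha1.le)) (sub_nonneg.2 hα1)]
  exact le_of_mul_le_mul_right hscaled hpos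

theorem dist_le_of_le_geometric {X : Type*} [PseudoMetricSpace X] {f : ℕ → X} {r C : ℝ}
    (hr0 : 0 ≤ r) (hr1 : r < 1) (hu : ∀ k, dist (f k) (f (k + 1)) ≤ C * r ^ k)
    {m n : ℕ} (hmn : m ≤ n) : dist (f m) (f n) ≤ C * r ^ m / (1 - r) := by
  have hC : 0 ≤ C := by simpa using dist_nonneg.trans (hu 0)
  calc dist (f m) (f n) ≤ ∑ i ∈ Ico m n, C * r ^ i := dist_le_Ico_sum_of_dist_le hmn fun _ _ => hu _
    _ = C * ∑ i ∈ Ico m n, r ^ i := (mul_sum ..).symm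
    _ ≤ C * (r ^ m / (1 - r)) := mul_le_mul_of_nonneg_left (geom_sum_Ico_le_of_lt_one hr0 hr1) hC
    _ = C * r ^ m / (1 - r) := mul_div_assoc .. |>.symm

section InterpolativeKannan

variable {E : Type*} [SeminormedAddCommGroup E] {T : E → E} {a α : ℝ}

theorem norm_sub_apply_apply_le (ha0 : 0 ≤ a) (ha1 : a < 1) (hα0 : 0 ≤ α) (hα1 : α ≤ 1)
    (hT : ∀ x y : E, ‖T x - T y‖ ≤ a * ‖x - T x‖ ^ α * ‖y - T y‖ ^ (1 - α)) (x : E) :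
    ‖T x - T (T x)‖ ≤ a * ‖x - T x‖ :=
  le_mul_of_le_mul_rpow_mul_rpow ha0 ha1 hα0 hα1 (norm_nonneg _) (norm_nonneg _) (hT x (T x))

theorem norm_iterate_sub_iterate_succ_le (ha0 : 0 ≤ a) (ha1 : a < 1) (hα0 : 0 ≤ α)
    (hα1 : α ≤ 1)
    (hT : ∀ x y : E, ‖T x - T y‖ ≤ a * ‖x - T x‖ ^ α * ‖y - T y‖ ^ (1 - α)) (x : E) (n : ℕ) :
    ‖T^[n] x - T^[n + 1] x‖ ≤ ‖x - T x‖ * a ^ n := by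
  rw [mul_comm]
  refine le_geom (u := fun k => ‖T^[k] x - T^[k + 1] x‖) ha0 n fun k _ => ?_
  simpa only [Function.iterate_succ_apply'] using
    norm_sub_apply_apply_le ha0 ha1 hα0 hα1 hT (T^[k] x)

end InterpolativeKannan

theorem picard_iterates_cauchy_estimate_general
    {E : Type*} [NormedAddCommGroup E]
    (T : E → E) (a α : ℝ) (ha0 : 0 ≤ a) (ha1 : a < 1)
    (hα0 : 0 < α) (hα1 : α < 1)
    (hT : ∀ x y : E, ‖T x - T y‖ ≤ a * ‖x - T x‖ ^ α * ‖y - T y‖ ^ (1 - α))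
    (x₀ : E) :
    ∀ n : ℕ, 1 ≤ n → ∀ r : ℕ, 1 ≤ r →
      ‖T^[n] x₀ - T^[n + r] x₀‖ ≤ (a ^ n / (1 - a)) * ‖x₀ - T x₀‖ := by
  intro n _ r _
  have hstep (k : ℕ) : dist (T^[k] x₀) (T^[k + 1] x₀) ≤ ‖x₀ - T x₀‖ * a ^ k := by
    rw [dist_eq_norm]
    exact norm_iterate_sub_iterate_succ_le ha0 ha1 hα0.le hα1.le hT x₀ k
  calc ‖T^[n] x₀ - T^[n + r] x₀‖ = dist (T^[n] x₀) (T^[n + r] x₀) := (dist_eq_norm ..).symm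
    _ ≤ ‖x₀ - T x₀‖ * a ^ n / (1 - a) :=
      dist_le_of_le_geometric (f := fun k => T^[k] x₀) ha0 ha1 hstep (Nat.le_add_right n r)
    _ = (a ^ n / (1 - a)) * ‖x₀ - T x₀‖ := by ring

theorem picard_iterates_cauchy_estimate
    {E : Type*} [NormedAddCommGroup E] [NormedSpace ℝ E]
    (T : E → E) (a α : ℝ) (ha0 : 0 ≤ a) (ha1 : a < 1)
    (hα0 : 0 < α) (hα1 : α < 1)
    (hT : ∀ x y : E, ‖T x - T y‖ ≤ a * ‖x - T x‖ ^ α * ‖y - T y‖ ^ (1 - α))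
    (x₀ : E) :
    ∀ n : ℕ, 1 ≤ n → ∀ r : ℕ, 1 ≤ r →
      ‖T^[n] x₀ - T^[n + r] x₀‖ ≤ (a ^ n / (1 - a)) * ‖x₀ - T x₀‖ :=
  picard_iterates_cauchy_estimate_general T a α ha0 ha1 hα0 hα1 hT x₀
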